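/- arXiv:0912.4827 — 6 statements merged into one kernel-verified Lean document; each statement's English description precedes it below -/
import Mathlib

section
/- Let (X,S) be a non-degenerate, involutive and braided set-theoretical solution on a finite set X. Then for all x, k ∈ X one has the equality of maps g_x ∘ g_{g_x^{-1}(k)} = g_k ∘ g_{g_k^{-1}(x)} : X → X. (This is the coherence identity underlying the proof that the structure monoid satisfies conditions (C₁) and (C₂).) -/
/-!
Braiding and looking at the first coordinate gives
`g_x ∘ g_y = g_{g_x(y)} ∘ g_{f_y(x)}`, and involutivity gives `g_{g_x(y)}(f_y(x)) = x`.
Taking `y = g_x⁻¹(k)` turns the first identity into `g_x ∘ g_{g_x⁻¹(k)} = g_k ∘ g_{f_y(x)}`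
and the second into `f_y(x) = g_k⁻¹(x)`.
-/

namespace YBE

/-- `(X,S)` is non-degenerate: all the maps `g_x = y ↦ S(x,y).1` and
`f_y = x ↦ S(x,y).2` are bijective. -/
def Nondegenerate {X : Type*} (S : X × X → X × X) : Prop :=
  (∀ x : X, Function.Bijective fun y => (S (x, y)).1) ∧
  (∀ y : X, Function.Bijective fun x => (S (x, y)).2)

/-- `(X,S)` is involutive: `S ∘ S = id`. -/
def InvolutiveSol {X : Type*} (S : X × X → X × X) : Prop := S ∘ S = id

/-- `S¹² = S × id` on `X × X × X`. -/
def S12 {X : Type*} (S : X × X → X × X) : X × X × X → X × X × X :=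
  fun p => ((S (p.1, p.2.1)).1, (S (p.1, p.2.1)).2, p.2.2)

/-- `S²³ = id × S` on `X × X × X`. -/
def S23 {X : Type*} (S : X × X → X × X) : X × X × X → X × X × X :=
  fun p => (p.1, S (p.2.1, p.2.2))

/-- `(X,S)` is braided: `S¹² ∘ S²³ ∘ S¹² = S²³ ∘ S¹² ∘ S²³`. -/
def BraidedSol {X : Type*} (S : X × X → X × X) : Prop :=
  S12 S ∘ S23 S ∘ S12 S = S23 S ∘ S12 S ∘ S23 S

/-- The map `g_x : y ↦ S(x,y).1`. -/
def gmap {X : Type*} (S : X × X → X × X) (x : X) : X → X := fun y => (S (x, y)).1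

/-- The map `f_y : x ↦ S(x,y).2`. -/
def fmap {X : Type*} (S : X × X → X × X) (y : X) : X → X := fun x => (S (x, y)).2

/-- The inverse `g_x⁻¹` of the (bijective) map `g_x`. -/
noncomputable def ginv {X : Type*} [Nonempty X] (S : X × X → X × X) (x : X) : X → X :=
  Function.invFun (gmap S x)

/-- The inverse `f_y⁻¹` of the (bijective) map `f_y`. -/
noncomputable def finv {X : Type*} [Nonempty X] (S : X × X → X × X) (y : X) : X → X :=
  Function.invFun (fmap S y)

/-- The defining relations of the structure monoid: `x·y = t·z` whenever `S(x,y) = (t,z)`. -/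
def ybRel {X : Type*} (S : X × X → X × X) : FreeMonoid X → FreeMonoid X → Prop :=
  fun a b => ∃ x y : X, a = FreeMonoid.of x * FreeMonoid.of y ∧
    b = FreeMonoid.of (S (x, y)).1 * FreeMonoid.of (S (x, y)).2

/-- The structure monoid of `(X,S)`: the monoid presented by generating set `X` and
relations `x·y = t·z` for each `x,y,t,z` with `S(x,y) = (t,z)`. -/
abbrev StructureMonoid {X : Type*} (S : X × X → X × X) : Type _ :=
  (conGen (ybRel S)).Quotient

/-- The image in the structure monoid of a generator `x ∈ X`. -/
def smi {X : Type*} (S : X × X → X × X) (x : X) : StructureMonoid S :=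
  (conGen (ybRel S)).mk' (FreeMonoid.of x)

/-- The defining relations of the structure group, as elements of the free group. -/
def ybGRels {X : Type*} (S : X × X → X × X) : Set (FreeGroup X) :=
  {w | ∃ x y : X, w = FreeGroup.of x * FreeGroup.of y *
    (FreeGroup.of (S (x, y)).1 * FreeGroup.of (S (x, y)).2)⁻¹}

/-- The structure group of `(X,S)`: the group presented by generating set `X` and
relations `x·y = t·z` for each `x,y,t,z` with `S(x,y) = (t,z)`. -/
abbrev StructureGroup {X : Type*} (S : X × X → X × X) : Type _ :=
  PresentedGroup (ybGRels S)

/-- `a` left-divides `b`. -/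
def LDvd {M : Type*} [Monoid M] (a b : M) : Prop := ∃ c, b = a * c

/-- `m` is a right lcm of the family `a`: each `a i` left-divides `m`, and `m`
left-divides every common right multiple of the `a i`. -/
def IsRightLcm {M : Type*} [Monoid M] {ι : Sort*} (a : ι → M) (m : M) : Prop :=
  (∀ i, LDvd (a i) m) ∧ ∀ w, (∀ i, LDvd (a i) w) → LDvd m w

section

variable {X : Type*} {S : X × X → X × X}

theorem Nondegenerate.gmap_ginv [Nonempty X] (hnd : Nondegenerate S) (x k : X) :
    gmap S x (ginv S x k) = k :=
  Function.rightInverse_invFun (hnd.1 x).2 k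

theorem Nondegenerate.ginv_gmap [Nonempty X] (hnd : Nondegenerate S) (x y : X) :
    ginv S x (gmap S x y) = y :=
  Function.leftInverse_invFun (hnd.1 x).1 y

theorem BraidedSol.gmap_gmap (hbr : BraidedSol S) (x y z : X) :
    gmap S (gmap S x y) (gmap S (fmap S y x) z) = gmap S x (gmap S y z) := by
  simpa [S12, S23, gmap, fmap] using congrArg Prod.fst (congrFun hbr (x, y, z))

theorem InvolutiveSol.gmap_gmap_fmap (hinv : InvolutiveSol S) (x y : X) :
    gmap S (gmap S x y) (fmap S y x) = x := by
  simpa [gmap, fmap] using congrArg Prod.fst (congrFun hinv (x, y))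

theorem fmap_ginv_eq_ginv [Nonempty X] (hnd : Nondegenerate S) (hinv : InvolutiveSol S)
    (x k : X) : fmap S (ginv S x k) x = ginv S k x := by
  have h := hinv.gmap_gmap_fmap x (ginv S x k)
  rw [hnd.gmap_ginv] at h
  rw [← hnd.ginv_gmap k (fmap S (ginv S x k) x), h]

end

theorem stmt2_general {X : Type*} [Nonempty X] (S : X × X → X × X)
    (hnd : Nondegenerate S) (hinv : InvolutiveSol S) (hbr : BraidedSol S) :
    ∀ x k : X, gmap S x ∘ gmap S (ginv S x k) = gmap S k ∘ gmap S (ginv S k x) := by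
  intro x k
  funext z
  have h := hbr.gmap_gmap x (ginv S x k) z
  rw [hnd.gmap_ginv, fmap_ginv_eq_ginv hnd hinv] at h
  exact h.symm

/-- For a non-degenerate, involutive and braided solution,
`g_x ∘ g_{g_x⁻¹(k)} = g_k ∘ g_{g_k⁻¹(x)}`. -/
theorem stmt2 {X : Type*} [Finite X] [Nonempty X] (S : X × X → X × X)
    (hnd : Nondegenerate S) (hinv : InvolutiveSol S) (hbr : BraidedSol S) :
    ∀ x k : X, gmap S x ∘ gmap S (ginv S x k) = gmap S k ∘ gmap S (ginv S k x) :=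
  stmt2_general S hnd hinv hbr
end YBE
end

section
/- Let (X,S) be a non-degenerate, involutive and braided set-theoretical solution on a finite set X, and let M be its structure monoid. Then M is left cancellative: for all a, b, c ∈ M, a·b = a·c implies b = c. -/
/-
Write `π(w) ∈ ℕ^X` (`cocycle`) for the multiset with `π(xw) = x + g_x(π(w))` and `λ_w`
(`lambdaMap`) for the composite of the maps `g_x` along `w`. Then `π(uv) = π(u) + λ_u(π(v))`,
and `(π, λ)` respects the defining relations: `π` by involutivity (`g_t(z) = x` when
`S(x,y) = (t,z)`), `λ` by the braid relation. Conversely, any letter of `π(w)` can be moved to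
the front of `w` by the relations, so induction on the length shows that `π` separates the
elements of the structure monoid. Hence `ab = ac` gives `π(a) + λ_a(π(b)) = π(a) + λ_a(π(c))`,
and cancelling `π(a)` and the injective `λ_a` yields `π(b) = π(c)`, i.e. `b = c`.
-/

namespace YBE

section Cocycle

variable {X : Type*} (S : X × X → X × X)

def cocycle : List X → Multiset X
  | [] => 0
  | x :: w => x ::ₘ (cocycle w).map (gmap S x)

def lambdaMap : List X → X → X
  | [] => id
  | x :: w => gmap S x ∘ lambdaMap w

lemma lambdaMap_append (u v : List X) :
    lambdaMap S (u ++ v) = lambdaMap S u ∘ lambdaMap S v := by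
  induction u with
  | nil => rfl
  | cons x u ih => simp only [List.cons_append, lambdaMap, ih, Function.comp_assoc]

lemma cocycle_append (u v : List X) :
    cocycle S (u ++ v) = cocycle S u + (cocycle S v).map (lambdaMap S u) := by
  induction u with
  | nil => simp [cocycle, lambdaMap]
  | cons x u ih =>
    simp only [List.cons_append, cocycle, lambdaMap, ih, Multiset.map_add, Multiset.map_map,
      Multiset.cons_add]

lemma cocycle_eq_zero_iff {w : List X} : cocycle S w = 0 ↔ w = [] := by
  cases w <;> simp [cocycle]

def cocycleCon : Con (FreeMonoid X) where
  r a b := cocycle S a.toList = cocycle S b.toList ∧ lambdaMap S a.toList = lambdaMap S b.toList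
  iseqv := ⟨fun _ => ⟨rfl, rfl⟩, fun h => ⟨h.1.symm, h.2.symm⟩,
    fun h h' => ⟨h.1.trans h'.1, h.2.trans h'.2⟩⟩
  mul' := by
    rintro a b c d ⟨hab, hab'⟩ ⟨hcd, hcd'⟩
    simp only [FreeMonoid.toList_mul, cocycle_append, lambdaMap_append, hab, hab', hcd, hcd',
      and_self]

def ofWord (w : List X) : StructureMonoid S :=
  (conGen (ybRel S)).mk' (FreeMonoid.ofList w)

variable {S}

lemma lambdaMap_injective (hg : ∀ x, Function.Injective (gmap S x)) (w : List X) :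
    Function.Injective (lambdaMap S w) := by
  induction w with
  | nil => exact Function.injective_id
  | cons x w ih => exact (hg x).comp ih

lemma gmap_fst_snd (hinv : InvolutiveSol S) (x y : X) :
    gmap S (S (x, y)).1 (S (x, y)).2 = x :=
  congrArg Prod.fst (congrFun hinv (x, y))

lemma gmap_comp_gmap (hbr : BraidedSol S) (x y : X) :
    gmap S x ∘ gmap S y = gmap S (S (x, y)).1 ∘ gmap S (S (x, y)).2 :=
  funext fun z => (congrArg Prod.fst (congrFun hbr (x, y, z))).symm

lemma conGen_ybRel_le_cocycleCon (hinv : InvolutiveSol S) (hbr : BraidedSol S) :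
    conGen (ybRel S) ≤ cocycleCon S := by
  refine Con.conGen_le.mpr ?_
  rintro _ _ ⟨x, y, rfl, rfl⟩
  refine ⟨?_, gmap_comp_gmap hbr x y⟩
  change x ::ₘ {gmap S x y} = (S (x, y)).1 ::ₘ {gmap S (S (x, y)).1 (S (x, y)).2}
  rw [gmap_fst_snd hinv]
  exact Multiset.cons_swap _ _ _

lemma ofWord_surjective : Function.Surjective (ofWord S) :=
  Con.mk'_surjective.comp FreeMonoid.ofList.surjective

lemma ofWord_append (u v : List X) : ofWord S (u ++ v) = ofWord S u * ofWord S v := by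
  rw [ofWord, FreeMonoid.ofList_append, map_mul]
  rfl

lemma ofWord_cons (x : X) (w : List X) : ofWord S (x :: w) = smi S x * ofWord S w :=
  ofWord_append [x] w

lemma smi_mul_smi (x y : X) :
    smi S x * smi S y = smi S (S (x, y)).1 * smi S (S (x, y)).2 :=
  (Con.eq _).mpr (ConGen.Rel.of _ _ ⟨x, y, rfl, rfl⟩)

lemma cocycle_eq_of_ofWord_eq (hinv : InvolutiveSol S) (hbr : BraidedSol S) {w v : List X}
    (h : ofWord S w = ofWord S v) : cocycle S w = cocycle S v :=
  (conGen_ybRel_le_cocycleCon hinv hbr ((Con.eq _).mp h)).1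

lemma exists_ofWord_eq_smi_mul {y : X} {w : List X} (hy : y ∈ cocycle S w) :
    ∃ w', ofWord S w = smi S y * ofWord S w' := by
  induction w generalizing y with
  | nil => simp [cocycle] at hy
  | cons x w ih =>
    rcases Multiset.mem_cons.mp hy with rfl | hy
    · exact ⟨w, ofWord_cons _ w⟩
    · obtain ⟨z, hz, rfl⟩ := Multiset.mem_map.mp hy
      obtain ⟨w', hw'⟩ := ih hz
      refine ⟨(S (x, z)).2 :: w', ?_⟩
      rw [ofWord_cons, hw', ofWord_cons, ← mul_assoc, smi_mul_smi, mul_assoc]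
      rfl

lemma ofWord_eq_of_cocycle_eq (hg : ∀ x, Function.Injective (gmap S x))
    (hinv : InvolutiveSol S) (hbr : BraidedSol S) {w v : List X}
    (h : cocycle S w = cocycle S v) : ofWord S w = ofWord S v := by
  induction w generalizing v with
  | nil => rw [(cocycle_eq_zero_iff S).mp h.symm]
  | cons x w ih =>
    have hx : x ∈ cocycle S v := h ▸ Multiset.mem_cons_self x _
    obtain ⟨v', hv'⟩ := exists_ofWord_eq_smi_mul hx
    have hcons : cocycle S (x :: w) = cocycle S (x :: v') := by
      rw [h, cocycle_eq_of_ofWord_eq hinv hbr (hv'.trans (ofWord_cons x v').symm)]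
    simp only [cocycle, Multiset.cons_inj_right] at hcons
    rw [ofWord_cons, ih (Multiset.map_injective (hg x) hcons), hv']

end Cocycle

theorem stmt3_general {X : Type*} (S : X × X → X × X)
    (hnd : Nondegenerate S) (hinv : InvolutiveSol S) (hbr : BraidedSol S) :
    ∀ a b c : StructureMonoid S, a * b = a * c → b = c := by
  have hg : ∀ x, Function.Injective (gmap S x) := fun x => (hnd.1 x).injective
  intro a b c h
  obtain ⟨u, rfl⟩ := ofWord_surjective a
  obtain ⟨v, rfl⟩ := ofWord_surjective b
  obtain ⟨w, rfl⟩ := ofWord_surjective c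
  rw [← ofWord_append, ← ofWord_append] at h
  have hπ := cocycle_eq_of_ofWord_eq hinv hbr h
  rw [cocycle_append, cocycle_append] at hπ
  exact ofWord_eq_of_cocycle_eq hg hinv hbr
    (Multiset.map_injective (lambdaMap_injective hg u) (add_left_cancel hπ))

/-- The structure monoid of a non-degenerate, involutive and braided solution on a finite
set is left cancellative. -/
theorem stmt3 {X : Type*} [Finite X] (S : X × X → X × X)
    (hnd : Nondegenerate S) (hinv : InvolutiveSol S) (hbr : BraidedSol S) :
    ∀ a b c : StructureMonoid S, a * b = a * c → b = c :=
  stmt3_general S hnd hinv hbr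
end YBE
end

section
/- Let (X,S) be a non-degenerate involutive set-theoretical solution on a finite set X. Assume the left-coherence equations hold: for all pairwise distinct i, j, k ∈ X, f^{-1}_{f_j^{-1}(k)}(f_j^{-1}(i)) = f^{-1}_{f_k^{-1}(j)}(f_k^{-1}(i)); and the coherence equations hold: for all pairwise distinct i, k, m ∈ X, g^{-1}_{g_i^{-1}(k)}(g_i^{-1}(m)) = g^{-1}_{g_k^{-1}(i)}(g_k^{-1}(m)). Then for all j, k ∈ X one has (A) f_j ∘ f_{f_j^{-1}(k)} = f_k ∘ f_{f_k^{-1}(j)}, and for all i, k ∈ X one has (B) g_i ∘ g_{g_i^{-1}(k)} = g_k ∘ g_{g_k^{-1}(i)}. -/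
/-!
Write `σ_y` for the permutation `f_y`. Identity (A) says that the permutations
`α = (σ_j σ_{σ_j⁻¹ k})⁻¹` and `β = (σ_k σ_{σ_k⁻¹ j})⁻¹` coincide, and left coherence says
they agree off `{j, k}`, so they can only differ by exchanging their values at `j` and `k`.
For an involutive solution `t = σ_y⁻¹(y)` satisfies `S(t, y) = (t, y)`, which makes
`y ↦ σ_y⁻¹(y)` injective; this rules the exchange out. Identity (B) is identity (A) for the
mirror solution `(x, y) ↦ swap (S (y, x))`, whose left coherence is the coherence of `S`.
-/

namespace YBE

open Equiv Function

theorem perm_apply_pair_eq_or_swap_of_eqOn_compl {X : Type*} {α β : Perm X} {a b : X}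
    (hab : a ≠ b) (h : Set.EqOn α β {a, b}ᶜ) :
    (α a = β a ∧ α b = β b) ∨ (α a = β b ∧ α b = β a) := by
  have mem_pair : ∀ x ∈ ({a, b} : Set X), β x = α a ∨ β x = α b := by
    intro x hx
    obtain ⟨y, hy⟩ := α.surjective (β x)
    by_cases hy_mem : y ∈ ({a, b} : Set X)
    · rcases hy_mem with rfl | rfl
      · exact .inl hy.symm
      · exact .inr hy.symm
    · have hxy : x = y := β.injective (hy ▸ h hy_mem)
      exact absurd (hxy ▸ hx) hy_mem
  have hβ : β a ≠ β b := β.injective.ne hab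
  rcases mem_pair a (by simp) with ha | ha <;> rcases mem_pair b (by simp) with hb | hb <;>
    grind

section Coherence

variable {X : Type*} (σ : X → Perm X)

theorem perm_mul_eq_of_coherent (hdiag : Injective fun y => (σ y)⁻¹ y)
    (hcoh : ∀ i j k, i ≠ j → i ≠ k → j ≠ k →
      (σ ((σ j)⁻¹ k))⁻¹ ((σ j)⁻¹ i) = (σ ((σ k)⁻¹ j))⁻¹ ((σ k)⁻¹ i))
    (j k : X) : σ j * σ ((σ j)⁻¹ k) = σ k * σ ((σ k)⁻¹ j) := by
  rcases eq_or_ne j k with rfl | hjk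
  · rfl
  rw [← inv_inj]
  have hoff : Set.EqOn ⇑(σ j * σ ((σ j)⁻¹ k))⁻¹ ⇑(σ k * σ ((σ k)⁻¹ j))⁻¹ {j, k}ᶜ := by
    intro i hi
    simp only [Set.mem_compl_iff, Set.mem_insert_iff, Set.mem_singleton_iff, not_or] at hi
    simpa [mul_inv_rev, Perm.mul_apply] using hcoh i j k hi.1 hi.2 hjk
  rcases perm_apply_pair_eq_or_swap_of_eqOn_compl hjk hoff with ⟨hj, hk⟩ | ⟨hj, hk⟩
  · ext i
    by_cases hi : i ∈ ({j, k} : Set X)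
    · rcases hi with rfl | rfl
      exacts [hj, hk]
    · exact hoff hi
  · simp only [mul_inv_rev, Perm.mul_apply] at hj hk
    have hc : (σ j)⁻¹ k = (σ k)⁻¹ j := hdiag hk
    rw [hc] at hj
    exact absurd (hdiag ((σ _)⁻¹.injective hj)) hjk

end Coherence

section Solution

variable {X : Type*} (S : X × X → X × X)

noncomputable def fPerm (hnd : Nondegenerate S) (y : X) : Perm X :=
  Equiv.ofBijective (fmap S y) (hnd.2 y)

theorem coe_fPerm (hnd : Nondegenerate S) (y : X) : ⇑(fPerm S hnd y) = fmap S y := rfl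

theorem finv_eq_coe_fPerm_inv [Nonempty X] (hnd : Nondegenerate S) (y : X) :
    finv S y = ⇑(fPerm S hnd y)⁻¹ :=
  funext fun x => Perm.eq_inv_iff_eq.mpr (rightInverse_invFun (hnd.2 y).2 x)

theorem gmap_finv_self [Nonempty X] (hnd : Nondegenerate S) (hinv : InvolutiveSol S) (y : X) :
    gmap S (finv S y y) y = finv S y y := by
  set t := finv S y y
  have hft : fmap S y t = y := rightInverse_invFun (hnd.2 y).2 y
  have hsnd : fmap S (fmap S y t) (gmap S t y) = y := congrArg Prod.snd (congrFun hinv (t, y))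
  rw [hft] at hsnd
  exact (hnd.2 y).1 (hsnd.trans hft.symm)

theorem injective_finv_self [Nonempty X] (hnd : Nondegenerate S) (hinv : InvolutiveSol S) :
    Injective fun y => finv S y y := by
  intro a b hab
  have ha := gmap_finv_self S hnd hinv a
  have hb := gmap_finv_self S hnd hinv b
  simp only at hab
  rw [← hab] at hb
  exact (hnd.1 _).1 (ha.trans hb.symm)

theorem fmap_comp_fmap_finv_comm [Nonempty X] (hnd : Nondegenerate S) (hinv : InvolutiveSol S)
    (hleft : ∀ i j k : X, i ≠ j → i ≠ k → j ≠ k →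
      finv S (finv S j k) (finv S j i) = finv S (finv S k j) (finv S k i))
    (j k : X) : fmap S j ∘ fmap S (finv S j k) = fmap S k ∘ fmap S (finv S k j) := by
  have hdiag : Injective fun y => (fPerm S hnd y)⁻¹ y := by
    simpa only [finv_eq_coe_fPerm_inv S hnd] using injective_finv_self S hnd hinv
  simp only [finv_eq_coe_fPerm_inv S hnd] at hleft ⊢
  simpa only [← coe_fPerm S hnd, Perm.coe_mul] using
    congrArg DFunLike.coe (perm_mul_eq_of_coherent (fPerm S hnd) hdiag hleft j k)

/-- The mirror solution: its maps `f_y` and `g_x` are the maps `g_y` and `f_x` of `S`. -/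
def flipSol : X × X → X × X := Prod.swap ∘ S ∘ Prod.swap

theorem nondegenerate_flipSol {S : X × X → X × X} (hnd : Nondegenerate S) :
    Nondegenerate (flipSol S) :=
  ⟨hnd.2, hnd.1⟩

theorem involutiveSol_flipSol {S : X × X → X × X} (hinv : InvolutiveSol S) :
    InvolutiveSol (flipSol S) := by
  funext p
  have h := congrFun hinv p.swap
  simp only [comp_apply, id] at h
  simp [flipSol, h]

end Solution

theorem stmt12_general {X : Type*} [Nonempty X] (S : X × X → X × X)
    (hnd : Nondegenerate S) (hinv : InvolutiveSol S)
    (hleft : ∀ i j k : X, i ≠ j → i ≠ k → j ≠ k →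
      finv S (finv S j k) (finv S j i) = finv S (finv S k j) (finv S k i))
    (hright : ∀ i k m : X, i ≠ k → i ≠ m → k ≠ m →
      ginv S (ginv S i k) (ginv S i m) = ginv S (ginv S k i) (ginv S k m)) :
    (∀ j k : X, fmap S j ∘ fmap S (finv S j k) = fmap S k ∘ fmap S (finv S k j)) ∧
    (∀ i k : X, gmap S i ∘ gmap S (ginv S i k) = gmap S k ∘ gmap S (ginv S k i)) :=
  ⟨fmap_comp_fmap_finv_comm S hnd hinv hleft,
    fmap_comp_fmap_finv_comm (flipSol S) (nondegenerate_flipSol hnd) (involutiveSol_flipSol hinv)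
      fun i j k hij hik hjk => hright j k i hjk hij.symm hik.symm⟩

/-- If a non-degenerate involutive solution satisfies the coherence and left-coherence
equations on pairwise distinct triples, then the identities
(A) `f_j ∘ f_{f_j⁻¹(k)} = f_k ∘ f_{f_k⁻¹(j)}` and
(B) `g_i ∘ g_{g_i⁻¹(k)} = g_k ∘ g_{g_k⁻¹(i)}` hold for all indices. -/
theorem stmt12 {X : Type*} [Finite X] [Nonempty X] (S : X × X → X × X)
    (hnd : Nondegenerate S) (hinv : InvolutiveSol S)
    (hleft : ∀ i j k : X, i ≠ j → i ≠ k → j ≠ k →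
      finv S (finv S j k) (finv S j i) = finv S (finv S k j) (finv S k i))
    (hright : ∀ i k m : X, i ≠ k → i ≠ m → k ≠ m →
      ginv S (ginv S i k) (ginv S i m) = ginv S (ginv S k i) (ginv S k m)) :
    (∀ j k : X, fmap S j ∘ fmap S (finv S j k) = fmap S k ∘ fmap S (finv S k j)) ∧
    (∀ i k : X, gmap S i ∘ gmap S (ginv S i k) = gmap S k ∘ gmap S (ginv S k i)) :=
  stmt12_general S hnd hinv hleft hright
end YBE
end

section
/- Let X be a finite set and f, g : X → X bijections with f ∘ g = g ∘ f, and let G be the group presented by generating set X with relations x·y = g(y)·f(x) for all x, y ∈ X (the structure group of the permutation solution S(x,y) = (g(y), f(x))). If x, x' ∈ X satisfy (f ∘ g)^k(x) = x' for some integer k ≥ 0, then the images of x and x' in G are equal. -/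
namespace YBE

/-- The defining relations of the structure group of the permutation solution
`S(x,y) = (g(y), f(x))`: `x·y = g(y)·f(x)` for all `x, y ∈ X`. -/
def permRels {X : Type*} (f g : X → X) : Set (FreeGroup X) :=
  {w | ∃ x y : X, w = FreeGroup.of x * FreeGroup.of y *
    (FreeGroup.of (g y) * FreeGroup.of (f x))⁻¹}

/-- The relation `x ≡ x′` iff `(f ∘ g)^[k] x = x′` for some `k ≥ 0`. -/
def pgRel {X : Type*} (f g : X → X) : X → X → Prop :=
  fun a b => ∃ k : ℕ, (f ∘ g)^[k] a = b

/-!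
Taking `x = g u` and `y = u` in the defining relation `x·y = g(y)·f(x)` gives
`g(u)·u = g(u)·f(g(u))`, so cancelling `g(u)` shows `u = (f ∘ g)(u)` in the structure group;
iterating this along the `(f ∘ g)`-orbit gives the claim.
-/

section PermutationSolution

variable {X : Type*} (f g : X → X)

theorem permRels_of_mul_of (a b : X) :
    (PresentedGroup.of a * PresentedGroup.of b : PresentedGroup (permRels f g)) =
      PresentedGroup.of (g b) * PresentedGroup.of (f a) := by
  simpa only [PresentedGroup.of, map_mul] using
    PresentedGroup.mk_eq_mk_of_mul_inv_mem (rels := permRels f g) ⟨a, b, rfl⟩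

theorem permRels_of_comp_apply (u : X) :
    (PresentedGroup.of ((f ∘ g) u) : PresentedGroup (permRels f g)) = PresentedGroup.of u :=
  (mul_left_cancel (permRels_of_mul_of f g (g u) u)).symm

theorem permRels_of_iterate_comp_apply (k : ℕ) (u : X) :
    (PresentedGroup.of ((f ∘ g)^[k] u) : PresentedGroup (permRels f g)) = PresentedGroup.of u := by
  induction k with
  | zero => rfl
  | succ n ih => rw [Function.iterate_succ_apply', permRels_of_comp_apply, ih]

end PermutationSolution

theorem stmt16_general {X : Type*} (f g : X → X)
    (x x' : X) (k : ℕ) (h : (f ∘ g)^[k] x = x') :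
    (PresentedGroup.of x : PresentedGroup (permRels f g)) = PresentedGroup.of x' := by
  rw [← h, permRels_of_iterate_comp_apply]

/-- In the structure group of a (not necessarily involutive) permutation solution, two
generators in the same `(f ∘ g)`-orbit become equal. -/
theorem stmt16 {X : Type*} [Finite X] (f g : X → X)
    (hf : Function.Bijective f) (hg : Function.Bijective g) (hc : f ∘ g = g ∘ f)
    (x x' : X) (k : ℕ) (h : (f ∘ g)^[k] x = x') :
    (PresentedGroup.of x : PresentedGroup (permRels f g)) = PresentedGroup.of x' :=
  stmt16_general f g x x' k h
end YBE
end

section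
/- Let X be a finite set and f, g : X → X bijections with f ∘ g = g ∘ f. Define the relation x ≡ x' on X by: there exists an integer k ≥ 0 with (f ∘ g)^k(x) = x'. Then ≡ is an equivalence relation; the maps f', g' on X' = X/≡ given by f'([x]) = [f(x)] and g'([x]) = [g(x)] are well defined and bijective; they satisfy f' ∘ g' = g' ∘ f' = id on X'. Consequently S' : X' × X' → X' × X' defined by S'([x],[y]) = ([g(y)],[f(x)]) is a non-degenerate, involutive and braided set-theoretical solution. -/
/-! On a finite set the bijection `h = f ∘ g` is a permutation, so `≡` is the relation of lying
on the same cycle of `h`. Since `f` and `g` commute with `h` they descend to the set of cycles,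
where `f ∘ g = h` and `g ∘ f = h` become the identity. A permutation solution
`S(x,y) = (g(y), f(x))` is non-degenerate when `f, g` are bijective, involutive when they are
mutually inverse and braided when they commute, so `S′` is all three. -/

namespace YBE

open Function

section PermutationSolution

variable {Y : Type*} {f g : Y → Y}

theorem nondegenerate_permSolution (hf : Bijective f) (hg : Bijective g) :
    Nondegenerate (fun p : Y × Y => (g p.2, f p.1)) :=
  ⟨fun _ => hg, fun _ => hf⟩

theorem involutiveSol_permSolution (hfg : f ∘ g = id) (hgf : g ∘ f = id) :
    InvolutiveSol (fun p : Y × Y => (g p.2, f p.1)) := by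
  funext p
  exact Prod.ext (congrFun hgf p.1) (congrFun hfg p.2)

theorem braidedSol_permSolution (hc : f ∘ g = g ∘ f) :
    BraidedSol (fun p : Y × Y => (g p.2, f p.1)) := by
  funext ⟨x, y, z⟩
  exact Prod.ext rfl (Prod.ext (congrFun hc y) rfl)

end PermutationSolution

section Orbit

variable {X : Type*} {h : X → X}

theorem exists_iterate_eq_iff_sameCycle [Finite X] (hh : Bijective h) {a b : X} :
    (∃ k : ℕ, h^[k] a = b) ↔ Equiv.Perm.SameCycle (Equiv.ofBijective h hh) a b := by
  constructor
  · rintro ⟨k, hk⟩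
    exact ⟨k, by simpa [Equiv.Perm.coe_pow] using hk⟩
  · intro hs
    obtain ⟨k, hk⟩ := hs.exists_nat_pow_eq
    exact ⟨k, by simpa [Equiv.Perm.coe_pow] using hk⟩

theorem equivalence_pgRel [Finite X] {f g : X → X} (hf : Bijective f) (hg : Bijective g) :
    Equivalence (pgRel f g) := by
  have hrel : pgRel f g = Equiv.Perm.SameCycle (Equiv.ofBijective (f ∘ g) (hf.comp hg)) :=
    funext₂ fun _ _ => propext (exists_iterate_eq_iff_sameCycle _)
  rw [hrel]
  exact Equiv.Perm.SameCycle.equivalence _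

theorem pgRel_apply_of_commute {f g φ : X → X} (hφ : Function.Commute φ (f ∘ g)) {a b : X}
    (hab : pgRel f g a b) : pgRel f g (φ a) (φ b) := by
  obtain ⟨k, rfl⟩ := hab
  exact ⟨k, ((hφ.iterate_right k) a).symm⟩

end Orbit

/-- The relation `≡` is an equivalence relation; the induced maps `f′, g′` on `X/≡` are
well defined, bijective and mutually inverse, and the induced permutation solution
`S′([x],[y]) = ([g(y)],[f(x)])` is non-degenerate, involutive and braided. -/
theorem stmt17 {X : Type*} [Finite X] (f g : X → X)
    (hf : Function.Bijective f) (hg : Function.Bijective g) (hc : f ∘ g = g ∘ f) :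
    Equivalence (pgRel f g) ∧
    ∃ f' g' : Quot (pgRel f g) → Quot (pgRel f g),
      (∀ x : X, f' (Quot.mk (pgRel f g) x) = Quot.mk (pgRel f g) (f x)) ∧
      (∀ x : X, g' (Quot.mk (pgRel f g) x) = Quot.mk (pgRel f g) (g x)) ∧
      Function.Bijective f' ∧ Function.Bijective g' ∧
      f' ∘ g' = id ∧ g' ∘ f' = id ∧
      Nondegenerate (fun p : Quot (pgRel f g) × Quot (pgRel f g) => (g' p.2, f' p.1)) ∧
      InvolutiveSol (fun p : Quot (pgRel f g) × Quot (pgRel f g) => (g' p.2, f' p.1)) ∧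
      BraidedSol (fun p : Quot (pgRel f g) × Quot (pgRel f g) => (g' p.2, f' p.1)) := by
  have hfh : Function.Commute f (f ∘ g) := fun a => congrArg f (congrFun hc a)
  have hgh : Function.Commute g (f ∘ g) := fun a => (congrFun hc (g a)).symm
  let f' := Quot.map f fun _ _ => pgRel_apply_of_commute hfh
  let g' := Quot.map g fun _ _ => pgRel_apply_of_commute hgh
  have hfg : f' ∘ g' = id := funext <| Quot.ind fun a =>
    (Quot.sound (⟨1, rfl⟩ : pgRel f g a (f (g a)))).symm
  have hgf : g' ∘ f' = id := funext <| Quot.ind fun a =>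
    (Quot.sound (⟨1, congrFun hc a⟩ : pgRel f g a (g (f a)))).symm
  have hbf : Bijective f' := bijective_iff_has_inverse.2 ⟨g', congrFun hgf, congrFun hfg⟩
  have hbg : Bijective g' := bijective_iff_has_inverse.2 ⟨f', congrFun hfg, congrFun hgf⟩
  exact ⟨equivalence_pgRel hf hg, f', g', fun _ => rfl, fun _ => rfl, hbf, hbg, hfg, hgf,
    nondegenerate_permSolution hbf hbg, involutiveSol_permSolution hfg hgf,
    braidedSol_permSolution (hfg.trans hgf.symm)⟩

end YBE
end

section
/- Let n ≥ 1 and let f be a permutation of {1, …, n}. Let M be the monoid presented by generators x_1, …, x_n and relations x_i·x_j = x_{f(j)}·x_{f^{-1}(i)} for all 1 ≤ i, j ≤ n (the structure monoid of the permutation solution S(i,j) = (f(j), f^{-1}(i))). If t lies on a cycle of f of length m (i.e. m is the cardinality of the orbit of t under f), then x_t^m = x_{f(t)}^m holds in M; consequently x_{t'}^m = x_t^m in M for every t' in the f-orbit of t. -/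
namespace YBE

theorem smi_rel {n : ℕ} (f : Equiv.Perm (Fin n))
    (S : Fin n × Fin n → Fin n × Fin n)
    (hS : ∀ i j : Fin n, S (i, j) = (f j, f.symm i)) (i j : Fin n) :
    smi S i * smi S j = smi S (f j) * smi S (f.symm i) := by
  have h : (conGen (ybRel S)) (FreeMonoid.of i * FreeMonoid.of j)
      (FreeMonoid.of (S (i, j)).1 * FreeMonoid.of (S (i, j)).2) :=
    ConGen.Rel.of _ _ ⟨i, j, rfl, rfl⟩
  rw [hS] at h
  simp only [smi, ← map_mul]
  exact (Con.eq _).2 h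

theorem smi_pow_aux {n : ℕ} (f : Equiv.Perm (Fin n))
    (S : Fin n × Fin n → Fin n × Fin n)
    (hS : ∀ i j : Fin n, S (i, j) = (f j, f.symm i)) (t : Fin n) :
    ∀ j : ℕ, smi S t ^ (j + 1) = smi S ((f ^ j) t) * smi S (f.symm t) ^ j := by
  intro j
  induction j with
  | zero => simp
  | succ j ih =>
    rw [pow_succ' (smi S t) (j + 1), ih, ← mul_assoc, smi_rel f S hS,
      mul_assoc, ← pow_succ']
    congr 2
    rw [pow_succ', Equiv.Perm.mul_apply]

/-- If `f^m t = t` and `m ≥ 1` then `x_t^m = x_{f⁻¹ t}^m`. -/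
theorem smi_pow_eq_symm {n : ℕ} (f : Equiv.Perm (Fin n))
    (S : Fin n × Fin n → Fin n × Fin n)
    (hS : ∀ i j : Fin n, S (i, j) = (f j, f.symm i)) (t : Fin n) (m : ℕ)
    (hm1 : 1 ≤ m) (hper : (f ^ m) t = t) :
    smi S t ^ m = smi S (f.symm t) ^ m := by
  obtain ⟨j, rfl⟩ : ∃ j, m = j + 1 := ⟨m - 1, (Nat.succ_pred_eq_of_pos hm1).symm⟩
  rw [smi_pow_aux f S hS t j]
  have hfj : (f ^ j) t = f.symm t := by
    apply f.injective
    rw [Equiv.apply_symm_apply]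
    conv_rhs => rw [← hper]
    rw [pow_succ', Equiv.Perm.mul_apply]
  rw [hfj, ← pow_succ']

/-- In the structure monoid of the permutation solution `S(i,j) = (f(j), f⁻¹(i))` for a
permutation `f` of `{1,…,n}`, if `t` lies on a cycle of `f` of length `m` then
`x_t^m = x_{f(t)}^m`, and hence `x_{t'}^m = x_t^m` for every `t'` in the `f`-orbit
of `t`. -/
theorem stmt19 (n : ℕ) (hn : 1 ≤ n) (f : Equiv.Perm (Fin n))
    (S : Fin n × Fin n → Fin n × Fin n)
    (hS : ∀ i j : Fin n, S (i, j) = (f j, f.symm i))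
    (t : Fin n) (m : ℕ)
    (hm : m = Nat.card {y : Fin n | ∃ k : ℕ, (f ^ k) t = y}) :
    smi S t ^ m = smi S (f t) ^ m ∧
    ∀ t' : Fin n, (∃ k : ℕ, (f ^ k) t = t') → smi S t' ^ m = smi S t ^ m :=  by
  classical
  -- orbit facts
  set d := Function.minimalPeriod (⇑f) t with hd
  have hper0 : Function.IsPeriodicPt (⇑f) (orderOf f) t := by
    show (⇑f)^[orderOf f] t = t
    rw [← Equiv.Perm.coe_pow, pow_orderOf_eq_one]; rfl
  have hpos : 0 < d := hper0.minimalPeriod_pos (orderOf_pos f)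
  have hdper : (f ^ d) t = t := by
    have := Function.isPeriodicPt_minimalPeriod (⇑f) t
    rwa [Equiv.Perm.coe_pow]
  -- m = d
  have hset : {y : Fin n | ∃ k : ℕ, (f ^ k) t = y} =
      ↑((Finset.range d).image fun k => (f ^ k) t) := by
    ext y
    simp only [Set.mem_setOf_eq, Finset.coe_image, Set.mem_image, Finset.mem_coe,
      Finset.mem_range]
    constructor
    · rintro ⟨k, rfl⟩
      refine ⟨k % d, Nat.mod_lt _ hpos, ?_⟩
      rw [Equiv.Perm.coe_pow, Equiv.Perm.coe_pow]
      exact Function.iterate_mod_minimalPeriod_eq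
    · rintro ⟨k, _, rfl⟩; exact ⟨k, rfl⟩
  have hmd : m = d := by
    rw [hm, hset, Nat.card_coe_set_eq, Set.ncard_coe_finset,
      Finset.card_image_of_injOn, Finset.card_range]
    intro a ha b hb hab
    simp only [Finset.coe_range, Set.mem_Iio] at ha hb
    exact Function.iterate_injOn_Iio_minimalPeriod ha hb hab
  have hm1 : 1 ≤ m := hmd ▸ hpos
  have hmper : (f ^ m) t = t := hmd ▸ hdper
  -- periodicity propagates along the orbit
  have hper' : ∀ k : ℕ, (f ^ m) ((f ^ k) t) = (f ^ k) t := by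
    intro k
    rw [← Equiv.Perm.mul_apply, (Commute.pow_pow_self f m k).eq,
      Equiv.Perm.mul_apply, hmper]
  have key : ∀ k : ℕ, smi S ((f ^ k) t) ^ m = smi S t ^ m := by
    intro k
    induction k with
    | zero => simp
    | succ k ih =>
      have h1 : smi S ((f ^ (k + 1)) t) ^ m = smi S (f.symm ((f ^ (k + 1)) t)) ^ m :=
        smi_pow_eq_symm f S hS _ m hm1 (hper' (k + 1))
      have h2 : f.symm ((f ^ (k + 1)) t) = (f ^ k) t := by
        rw [pow_succ', Equiv.Perm.mul_apply, Equiv.symm_apply_apply]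
      rw [h1, h2, ih]
  constructor
  · have := key 1
    simpa using this.symm
  · rintro t' ⟨k, rfl⟩
    exact key k
end YBE
end
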